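/- Let μ be a Borel measure on ℝ with ∫ (1+λ²)⁻¹ dμ = 1, let κ ∈ ℂ with |κ| < 1, and let z₀ ∈ ℂ with Im z₀ > 0. Define M(w) = ∫ (1/(λ-w) - λ/(1+λ²)) dμ(λ) for Im w > 0. Then ∫ (1/(λ-z₀))·((i-z₀)/(λ-i) + κ·(i+z₀)/(λ+i)) dμ(λ) = -M(z₀) + i + κ·(M(z₀) + i). In particular, this integral vanishes if and only if κ = (M(z₀) - i)/(M(z₀) + i). -/

import Mathlib

open MeasureTheory Complex

/-!
By partial fractions, with `F_z(λ) = (λ - z)⁻¹ - λ / (1 + λ²)` the integrand of `M`,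
`(i - z) / ((λ - z)(λ - i)) = i / (1 + λ²) - F_z(λ)` and
`(i + z) / ((λ - z)(λ + i)) = F_z(λ) + i / (1 + λ²)`.
Since `F_z(λ) = (z + (1 + z²) / (λ - z)) / (1 + λ²)` is `(1 + λ²)⁻¹` times a function bounded by
`|z| + |1 + z²| / |Im z|`, everything is `μ`-integrable, and integrating gives `i - M + κ (M + i)`.
-/

/-- The function `M` of the paper. -/
noncomputable def herglotzFunction (μ : Measure ℝ) (z : ℂ) : ℂ :=
  ∫ x, (((x : ℂ) - z)⁻¹ - (x : ℂ) / (1 + (x : ℂ) ^ 2)) ∂μ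

lemma ofReal_sub_ne_zero_of_im_ne_zero (x : ℝ) {z : ℂ} (hz : z.im ≠ 0) : (x : ℂ) - z ≠ 0 := by
  intro h
  exact hz (by simpa using (congr_arg Complex.im h).symm)

lemma norm_inv_ofReal_sub_le (x : ℝ) {z : ℂ} (hz : z.im ≠ 0) :
    ‖((x : ℂ) - z)⁻¹‖ ≤ |z.im|⁻¹ := by
  rw [norm_inv]
  refine inv_anti₀ (abs_pos.mpr hz) ?_
  simpa using abs_im_le_norm ((x : ℂ) - z)

lemma one_add_ofReal_sq_ne_zero (x : ℝ) : (1 : ℂ) + (x : ℂ) ^ 2 ≠ 0 := by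
  norm_cast; positivity

lemma inv_sub_sub_div_one_add_sq {x z : ℂ} (hxz : x - z ≠ 0) (hx : 1 + x ^ 2 ≠ 0) :
    (x - z)⁻¹ - x / (1 + x ^ 2) = (z + (1 + z ^ 2) * (x - z)⁻¹) * (1 + x ^ 2)⁻¹ := by
  field_simp
  ring

lemma integrable_inv_ofReal_sub_sub_div {μ : Measure ℝ}
    (hρ : Integrable (fun x : ℝ => (1 + x ^ 2)⁻¹) μ) {z : ℂ} (hz : z.im ≠ 0) :
    Integrable (fun x : ℝ => ((x : ℂ) - z)⁻¹ - (x : ℂ) / (1 + (x : ℂ) ^ 2)) μ := by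
  have hbdd : ∀ x : ℝ, ‖z + (1 + z ^ 2) * ((x : ℂ) - z)⁻¹‖ ≤ ‖z‖ + ‖1 + z ^ 2‖ * |z.im|⁻¹ :=
    fun x => (norm_add_le _ _).trans <| by
      rw [norm_mul]; gcongr; exact norm_inv_ofReal_sub_le x hz
  refine (hρ.ofReal.bdd_mul (c := ‖z‖ + ‖1 + z ^ 2‖ * |z.im|⁻¹) ?_
    (.of_forall hbdd)).congr (.of_forall fun x => ?_)
  · fun_prop
  · push_cast
    exact (inv_sub_sub_div_one_add_sq (ofReal_sub_ne_zero_of_im_ne_zero x hz)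
      (one_add_ofReal_sq_ne_zero x)).symm

lemma inv_sub_mul_div_sub_I_add_div_add_I (x z κ : ℂ) (hxz : x - z ≠ 0) (hxI : x - I ≠ 0)
    (hxI' : x + I ≠ 0) :
    (x - z)⁻¹ * ((I - z) / (x - I) + κ * (I + z) / (x + I)) =
      I * (1 + x ^ 2)⁻¹ - ((x - z)⁻¹ - x / (1 + x ^ 2)) +
        κ * (((x - z)⁻¹ - x / (1 + x ^ 2)) + I * (1 + x ^ 2)⁻¹) := by
  have hx : 1 + x ^ 2 = (x - I) * (x + I) := by linear_combination I_sq
  rw [hx]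
  field_simp
  ring

lemma integral_ofReal_one_add_sq_inv {μ : Measure ℝ} (hnorm : ∫ x, (1 + x ^ 2)⁻¹ ∂μ = 1) :
    ∫ x : ℝ, (1 + (x : ℂ) ^ 2)⁻¹ ∂μ = 1 := by
  have h := integral_ofReal (𝕜 := ℂ) (μ := μ) (f := fun x => (1 + x ^ 2)⁻¹)
  push_cast at h
  exact h.trans (by simp [hnorm])

theorem integral_inv_ofReal_sub_mul_div_sub_I_add_div_add_I {μ : Measure ℝ}
    (hnorm : ∫ x, (1 + x ^ 2)⁻¹ ∂μ = 1) (κ : ℂ) {z : ℂ} (hz : z.im ≠ 0) :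
    ∫ x : ℝ, ((x : ℂ) - z)⁻¹ * ((I - z) / ((x : ℂ) - I) + κ * (I + z) / ((x : ℂ) + I)) ∂μ =
      -herglotzFunction μ z + I + κ * (herglotzFunction μ z + I) := by
  have hρ : Integrable (fun x : ℝ => (1 + x ^ 2)⁻¹) μ :=
    .of_integral_ne_zero (by rw [hnorm]; exact one_ne_zero)
  have hI : Integrable (fun x : ℝ => I * (1 + (x : ℂ) ^ 2)⁻¹) μ := by
    exact_mod_cast hρ.ofReal.const_mul I
  have hF := integrable_inv_ofReal_sub_sub_div hρ hz
  have hxI (x : ℝ) : (x : ℂ) + I ≠ 0 := by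
    simpa using ofReal_sub_ne_zero_of_im_ne_zero x (z := -I) (by simp)
  simp_rw [fun x : ℝ => inv_sub_mul_div_sub_I_add_div_add_I x z κ
    (ofReal_sub_ne_zero_of_im_ne_zero x hz) (ofReal_sub_ne_zero_of_im_ne_zero x (by simp)) (hxI x)]
  rw [integral_add, integral_sub, integral_const_mul, integral_const_mul, integral_add,
    integral_const_mul, integral_ofReal_one_add_sq_inv hnorm, herglotzFunction]
  · ring
  exacts [hF, hI, hI, hF, hI.sub hF, (hF.add hI).const_mul κ]

theorem eigenvalue_criterion_integral_general
    (μ : Measure ℝ)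
    (hnorm : ∫ x, (1 + x ^ 2)⁻¹ ∂μ = 1)
    (κ : ℂ)
    (z₀ : ℂ) (hz₀ : 0 < z₀.im)
    (M : ℂ)
    (hM : M = ∫ x, (((x : ℂ) - z₀)⁻¹ - (x : ℂ) / (1 + (x : ℂ) ^ 2)) ∂μ)
    (hMi : M + I ≠ 0) :
    (∫ x, (((x : ℂ) - z₀)⁻¹ *
        ((I - z₀) / ((x : ℂ) - I) + κ * (I + z₀) / ((x : ℂ) + I))) ∂μ) =
      -M + I + κ * (M + I) ∧
    ((∫ x, (((x : ℂ) - z₀)⁻¹ *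
        ((I - z₀) / ((x : ℂ) - I) + κ * (I + z₀) / ((x : ℂ) + I))) ∂μ) = 0 ↔
      κ = (M - I) / (M + I)) := by
  obtain rfl : M = herglotzFunction μ z₀ := hM
  have key := integral_inv_ofReal_sub_mul_div_sub_I_add_div_add_I hnorm κ hz₀.ne'
  refine ⟨key, ?_⟩
  rw [key, eq_div_iff hMi]
  constructor <;> intro h <;> linear_combination h

theorem eigenvalue_criterion_integral
    (μ : Measure ℝ)
    (hnorm : ∫ x, (1 + x ^ 2)⁻¹ ∂μ = 1)
    (κ : ℂ) (hκ : ‖κ‖ < 1)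
    (z₀ : ℂ) (hz₀ : 0 < z₀.im)
    (M : ℂ)
    (hM : M = ∫ x, (((x : ℂ) - z₀)⁻¹ - (x : ℂ) / (1 + (x : ℂ) ^ 2)) ∂μ)
    (hMi : M + I ≠ 0) :
    (∫ x, (((x : ℂ) - z₀)⁻¹ *
        ((I - z₀) / ((x : ℂ) - I) + κ * (I + z₀) / ((x : ℂ) + I))) ∂μ) =
      -M + I + κ * (M + I) ∧
    ((∫ x, (((x : ℂ) - z₀)⁻¹ *
        ((I - z₀) / ((x : ℂ) - I) + κ * (I + z₀) / ((x : ℂ) + I))) ∂μ) = 0 ↔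
      κ = (M - I) / (M + I)) :=
  eigenvalue_criterion_integral_general μ hnorm κ z₀ hz₀ M hM hMi
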